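/- arXiv:2412.05867 — 4 statements merged into one kernel-verified Lean document; each statement's English description precedes it below -/
import Mathlib

section
/- Let K be an imaginary quadratic field with ring of integers O, let p be a rational prime, and set O_p = O ⊗_ℤ ℤ_p. Let o ≥ 0 be an integer and let ε : O_p^× → ℂ^× be a group homomorphism such that ε(η)² = 1 for every η ∈ ℤ_p^×, and such that the restriction of ε to the subgroup 1 + p³O_p has order exactly p^o (that is, p^o is the smallest positive integer k with ε^k trivial on 1 + p³O_p). Then {x ∈ 1 + p³O_p : ε(x) = 1} = (1 + p³ℤ_p)·(1 + p^{3+o}O_p). -/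
open NumberField
open scoped TensorProduct

/-- The subgroup `1 + cA = {x ∈ Aˣ | x = 1 + c·a for some a ∈ A}` of the unit group of a
commutative ring `A`. -/
def onePlusSubgroup {A : Type*} [CommRing A] (c : A) : Subgroup Aˣ where
  carrier := {x : Aˣ | ∃ a : A, (x : A) = 1 + c * a}
  one_mem' := ⟨0, by simp⟩
  mul_mem' := by
    rintro x y ⟨a, ha⟩ ⟨b, hb⟩
    exact ⟨a + b + c * (a * b), by rw [Units.val_mul, ha, hb]; ring⟩
  inv_mem' := by
    rintro x ⟨a, ha⟩
    refine ⟨-(a * ((x⁻¹ : Aˣ) : A)), ?_⟩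
    linear_combination Units.inv_mul x - ((x⁻¹ : Aˣ) : A) * ha

/-!
Write `U n = 1 + pⁿO_p` and `O_p = ℤ_p + ℤ_p w`, and put `g = 1 + p³w`. Since
`g^(p^k) ≡ 1 + p^(3+k) w` modulo `p^(4+k)`, each quotient `U (3+k) / U (4+k)` is generated by the
images of `g^(p^k)` and of `1 + p^(3+k) ℤ_p`; hence `U 3 = ⟨g⟩ · H` with
`H = (1 + p³ℤ_p) · U (3+o)`. The character `ε` kills `1 + p³ℤ_p`, whose elements are squares of
units of `ℤ_p` (Hensel), and it kills `U (3+o) = U 3 ^ (p^o)` (successive approximation in the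
`p`-adically complete ring `O_p`). So `ε (U 3)` is generated by `ε g`, which therefore has order
exactly `p^o`, and `g^n · h` lies in the kernel iff `p^o ∣ n`, i.e. iff `g^n ∈ U (3+o) ⊆ H`.
-/

universe u

theorem IsPrecomplete.of_finite {R M : Type u} [CommRing R] [IsNoetherianRing R] (I : Ideal R)
    [IsPrecomplete I R] [AddCommGroup M] [Module R M] [Module.Finite R M] :
    IsPrecomplete I M := by
  rw [← AdicCompletion.of_surjective_iff]
  intro y
  obtain ⟨t, rfl⟩ :=
    (AdicCompletion.ofTensorProduct_bijective_of_finite_of_isNoetherian I M).surjective y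
  induction t using TensorProduct.induction_on with
  | zero => exact ⟨0, by simp⟩
  | tmul r x =>
    obtain ⟨s, rfl⟩ := AdicCompletion.of_surjective I R r
    refine ⟨s • x, ?_⟩
    rw [AdicCompletion.ofTensorProduct_tmul, map_smul, ← algebraMap_smul (AdicCompletion I R) s]
    rfl
  | add t₁ t₂ h₁ h₂ =>
    obtain ⟨x₁, h₁⟩ := h₁
    obtain ⟨x₂, h₂⟩ := h₂
    exact ⟨x₁ + x₂, by simp [h₁, h₂]⟩

theorem PadicInt.isAdicComplete_span_natCast {p : ℕ} [Fact p.Prime] (A : Type) [CommRing A]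
    [Algebra ℤ_[p] A] [Module.Finite ℤ_[p] A] : IsAdicComplete (Ideal.span {(p : A)}) A := by
  have hspan : Ideal.span {(p : A)} =
      (IsLocalRing.maximalIdeal ℤ_[p]).map (algebraMap ℤ_[p] A) := by
    rw [PadicInt.maximalIdeal_eq_span_p, Ideal.map_span, Set.image_singleton, map_natCast]
  have := IsPrecomplete.of_finite (IsLocalRing.maximalIdeal ℤ_[p]) (M := A)
  rw [hspan]
  exact { toIsHausdorff := IsHausdorff.map_algebraMap_iff.2 inferInstance,
          toIsPrecomplete := IsPrecomplete.map_algebraMap_iff.2 inferInstance }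

section Adic

variable {A : Type*} [CommRing A] {π : A}

theorem smodEq_span_singleton_pow_iff {x y : A} (n : ℕ) :
    x ≡ y [SMOD (Ideal.span {π} ^ n • ⊤ : Submodule A A)] ↔ π ^ n ∣ x - y := by
  rw [SModEq.sub_mem, smul_eq_mul, Ideal.mul_top, Ideal.span_singleton_pow,
    Ideal.mem_span_singleton]

theorem eq_zero_of_forall_pow_dvd [IsHausdorff (Ideal.span {π}) A] {x : A}
    (h : ∀ n, π ^ n ∣ x) : x = 0 :=
  IsHausdorff.haus ‹_› x fun n => (smodEq_span_singleton_pow_iff n).2 (by simpa using h n)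

theorem exists_forall_pow_dvd_sub [IsPrecomplete (Ideal.span {π}) A] (f : ℕ → A)
    (h : ∀ n, π ^ n ∣ f (n + 1) - f n) : ∃ L, ∀ n, π ^ n ∣ L - f n := by
  have hcauchy {m n : ℕ} (hmn : m ≤ n) : π ^ m ∣ f n - f m := by
    induction n, hmn using Nat.le_induction with
    | base => simp
    | succ n hmn ih => simpa using dvd_add ((pow_dvd_pow π hmn).trans (h n)) ih
  obtain ⟨L, hL⟩ := IsPrecomplete.prec ‹_› fun hmn =>
    (smodEq_span_singleton_pow_iff _).2 (dvd_sub_comm.1 (hcauchy hmn))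
  exact ⟨L, fun n => dvd_sub_comm.1 ((smodEq_span_singleton_pow_iff n).1 (hL n))⟩

theorem isUnit_one_add_mul [IsAdicComplete (Ideal.span {π}) A] (a : A) : IsUnit (1 + π * a) := by
  have h := Ideal.mem_jacobson_bot.1
    (IsAdicComplete.le_jacobson_bot _ (Ideal.mem_span_singleton_self π)) a
  rwa [add_comm] at h

end Adic

section OnePlus

variable {A : Type*} [CommRing A]

theorem mem_onePlusSubgroup_iff_dvd {c : A} {x : Aˣ} :
    x ∈ onePlusSubgroup c ↔ c ∣ (x : A) - 1 := by
  simp only [dvd_def, sub_eq_iff_eq_add']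
  rfl

theorem mul_inv_mem_onePlusSubgroup_iff {c : A} {x y : Aˣ} :
    x * y⁻¹ ∈ onePlusSubgroup c ↔ c ∣ (x : A) - y := by
  have h : (x : A) * ↑y⁻¹ - 1 = (x - y) * ↑y⁻¹ := by rw [sub_mul, Units.mul_inv]
  rw [mem_onePlusSubgroup_iff_dvd, Units.val_mul, h, Units.dvd_mul_right]

theorem onePlusSubgroup_pow_antitone (π : A) : Antitone fun n : ℕ => onePlusSubgroup (π ^ n) :=
  fun _ _ hmn _ hx =>
    mem_onePlusSubgroup_iff_dvd.2 ((pow_dvd_pow π hmn).trans (mem_onePlusSubgroup_iff_dvd.1 hx))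

theorem exists_mem_onePlusSubgroup_pow_coe_eq {π : A} [IsAdicComplete (Ideal.span {π}) A]
    {n : ℕ} (hn : n ≠ 0) (a : A) :
    ∃ u ∈ onePlusSubgroup (π ^ n), (u : A) = 1 + π ^ n * a := by
  obtain ⟨u, hu⟩ : IsUnit (1 + π ^ n * a) := by
    rw [← Nat.sub_add_cancel (Nat.pos_of_ne_zero hn), pow_succ', mul_assoc]
    exact isUnit_one_add_mul _
  exact ⟨u, ⟨a, hu⟩, hu⟩

end OnePlus

section Binomial

variable {A : Type*} [CommRing A]

theorem exists_one_add_pow_eq (c : A) (n : ℕ) : ∃ f, (1 + c) ^ n = 1 + n * c + c ^ 2 * f := by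
  obtain ⟨f, hf⟩ := sq_dvd_add_pow_sub_sub c 1 n
  exact ⟨f, by linear_combination hf⟩

theorem exists_one_add_pow_mul_pow_eq (q : ℕ) {m : ℕ} (hm : 2 ≤ m) (c : A) :
    ∃ d, (1 + (q : A) ^ m * c) ^ q = 1 + (q : A) ^ (m + 1) * (c + q * d) := by
  obtain ⟨f, hf⟩ := exists_one_add_pow_eq ((q : A) ^ m * c) q
  obtain ⟨m, rfl⟩ := Nat.exists_eq_add_of_le' hm
  exact ⟨(q : A) ^ m * c ^ 2 * f, by rw [hf]; ring⟩

theorem exists_one_add_pow_mul_pow_pow_eq (q : ℕ) {m : ℕ} (hm : 2 ≤ m) (c : A) (k : ℕ) :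
    ∃ e, (1 + (q : A) ^ m * c) ^ q ^ k = 1 + (q : A) ^ (m + k) * (c + q * e) := by
  induction k with
  | zero => exact ⟨0, by simp⟩
  | succ k ih =>
    obtain ⟨e, he⟩ := ih
    obtain ⟨d, hd⟩ := exists_one_add_pow_mul_pow_eq q (by omega : 2 ≤ m + k) (c + q * e)
    exact ⟨e + d, by rw [pow_succ, pow_mul, he, hd]; ring⟩

end Binomial

section Root

variable {A : Type*} [CommRing A]

theorem exists_limit_mem_onePlusSubgroup {π : A} [IsAdicComplete (Ideal.span {π}) A] {m : ℕ}
    (hm : m ≠ 0) (y : ℕ → Aˣ) (hy : ∀ j, y j ∈ onePlusSubgroup (π ^ m))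
    (hcauchy : ∀ j, y (j + 1) * (y j)⁻¹ ∈ onePlusSubgroup (π ^ j)) :
    ∃ u ∈ onePlusSubgroup (π ^ m), ∀ j, π ^ j ∣ (u : A) - y j := by
  obtain ⟨L, hL⟩ := exists_forall_pow_dvd_sub (fun j => (y j : A)) fun j =>
    mul_inv_mem_onePlusSubgroup_iff.1 (hcauchy j)
  obtain ⟨a, ha⟩ : π ^ m ∣ L - 1 := by
    simpa using dvd_add (hL m) (mem_onePlusSubgroup_iff_dvd.1 (hy m))
  obtain ⟨u, hu, hua⟩ := exists_mem_onePlusSubgroup_pow_coe_eq (π := π) hm a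
  exact ⟨u, hu, by rwa [hua, ← ha, add_sub_cancel]⟩

variable (q : ℕ) [IsAdicComplete (Ideal.span {(q : A)}) A] {m : ℕ}

theorem exists_mul_inv_pow_mem_onePlusSubgroup (hm : 2 ≤ m) {x : Aˣ}
    (hx : x ∈ onePlusSubgroup ((q : A) ^ (m + 1))) :
    ∃ z ∈ onePlusSubgroup ((q : A) ^ m),
      x * (z ^ q)⁻¹ ∈ onePlusSubgroup ((q : A) ^ (m + 2)) := by
  obtain ⟨c, hc⟩ := hx
  obtain ⟨z, hz, hzc⟩ :=
    exists_mem_onePlusSubgroup_pow_coe_eq (π := (q : A)) (n := m) (by omega) c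
  obtain ⟨d, hd⟩ := exists_one_add_pow_mul_pow_eq q hm c
  refine ⟨z, hz, mul_inv_mem_onePlusSubgroup_iff.2 ⟨-d, ?_⟩⟩
  rw [hc, Units.val_pow_eq_pow_val, hzc, hd]
  ring

theorem exists_seq_pow_approx (hm : 2 ≤ m) {x : Aˣ}
    (hx : x ∈ onePlusSubgroup ((q : A) ^ (m + 1))) :
    ∃ y : ℕ → Aˣ, (∀ j, y j ∈ onePlusSubgroup ((q : A) ^ m)) ∧
      (∀ j, y (j + 1) * (y j)⁻¹ ∈ onePlusSubgroup ((q : A) ^ (m + j))) ∧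
      ∀ j, x * (y j ^ q)⁻¹ ∈ onePlusSubgroup ((q : A) ^ (m + 1 + j)) := by
  -- an implication rather than a hypothesis, so that `choose` returns a non-dependent function
  have step (j : ℕ) (y : Aˣ) : ∃ z ∈ onePlusSubgroup ((q : A) ^ (m + j)),
      x * (y ^ q)⁻¹ ∈ onePlusSubgroup ((q : A) ^ (m + 1 + j)) →
        x * ((y * z) ^ q)⁻¹ ∈ onePlusSubgroup ((q : A) ^ (m + 1 + (j + 1))) := by
    by_cases h : x * (y ^ q)⁻¹ ∈ onePlusSubgroup ((q : A) ^ (m + j + 1))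
    · obtain ⟨z, hz, hxz⟩ := exists_mul_inv_pow_mem_onePlusSubgroup q (by omega) h
      refine ⟨z, hz, fun _ => ?_⟩
      rw [mul_pow, mul_inv, ← mul_assoc]
      convert hxz using 3
      omega
    · exact ⟨1, one_mem _, fun h' => absurd (by rwa [add_right_comm] at h') h⟩
  choose z hz hstep using step
  let y : ℕ → Aˣ := fun j => Nat.rec 1 (fun j yj => yj * z j yj) j
  have hy_succ (j : ℕ) : y (j + 1) = y j * z j (y j) := rfl
  refine ⟨y, fun j => ?_, fun j => ?_, fun j => ?_⟩
  · induction j with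
    | zero => exact one_mem _
    | succ j ih =>
      rw [hy_succ]
      exact mul_mem ih (onePlusSubgroup_pow_antitone _ (Nat.le_add_right m j) (hz j (y j)))
  · rw [hy_succ, mul_comm, inv_mul_cancel_left]
    exact hz j (y j)
  · induction j with
    | zero => simpa [y] using hx
    | succ j ih => exact hy_succ j ▸ hstep j (y j) ih

theorem exists_pow_eq_of_mem_onePlusSubgroup (hm : 2 ≤ m) {x : Aˣ}
    (hx : x ∈ onePlusSubgroup ((q : A) ^ (m + 1))) :
    ∃ y ∈ onePlusSubgroup ((q : A) ^ m), y ^ q = x := by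
  obtain ⟨y, hy, hcauchy, happrox⟩ := exists_seq_pow_approx q hm hx
  obtain ⟨u, hu, hlim⟩ := exists_limit_mem_onePlusSubgroup (π := (q : A)) (m := m) (by omega)
    y hy fun j => onePlusSubgroup_pow_antitone _ (Nat.le_add_left j m) (hcauchy j)
  refine ⟨u, hu, Units.ext (sub_eq_zero.1 (eq_zero_of_forall_pow_dvd (π := (q : A)) ?_))⟩
  intro j
  have h₁ : (q : A) ^ j ∣ (u : A) ^ q - (y j : A) ^ q :=
    (hlim j).trans (sub_dvd_pow_sub_pow _ _ q)
  have h₂ : (q : A) ^ j ∣ (y j : A) ^ q - x :=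
    (pow_dvd_pow _ (by omega)).trans
      (dvd_sub_comm.1 (mul_inv_mem_onePlusSubgroup_iff.1 (happrox j)))
  simpa using dvd_add h₁ h₂

theorem exists_pow_pow_eq_of_mem_onePlusSubgroup (hm : 2 ≤ m) (k : ℕ) {x : Aˣ}
    (hx : x ∈ onePlusSubgroup ((q : A) ^ (m + k))) :
    ∃ y ∈ onePlusSubgroup ((q : A) ^ m), y ^ q ^ k = x := by
  induction k generalizing x with
  | zero => exact ⟨x, hx, by simp⟩
  | succ k ih =>
    obtain ⟨y, hy, rfl⟩ := exists_pow_eq_of_mem_onePlusSubgroup q (by omega : 2 ≤ m + k) hx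
    obtain ⟨y', hy', rfl⟩ := ih hy
    exact ⟨y', hy', by rw [pow_succ, pow_mul]⟩

end Root

open Polynomial in
theorem PadicInt.exists_sq_eq_of_mem_onePlusSubgroup {p : ℕ} [Fact p.Prime] {η : ℤ_[p]ˣ}
    (hη : η ∈ onePlusSubgroup ((p : ℤ_[p]) ^ 3)) : ∃ u : ℤ_[p]ˣ, u ^ 2 = η := by
  obtain ⟨c, hc⟩ := hη
  have hp : ‖(p : ℤ_[p])‖ < 1 := PadicInt.norm_natCast_lt_one_iff.2 dvd_rfl
  have hp0 : 0 < ‖(p : ℤ_[p])‖ := by simp [PadicInt.norm_p, (Fact.out : p.Prime).pos]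
  have h2 : ‖(p : ℤ_[p])‖ ≤ ‖(2 : ℤ_[p])‖ := by
    by_cases hp2 : p = 2
    · subst hp2; norm_num
    · have : ‖((2 : ℕ) : ℤ_[p])‖ = 1 := PadicInt.norm_natCast_eq_one_iff.2
        ((Nat.coprime_primes Fact.out Nat.prime_two).2 hp2)
      rw [← Nat.cast_ofNat, this]
      exact PadicInt.norm_le_one _
  set F : ℤ_[p][X] := X ^ 2 - C (η : ℤ_[p])
  have hnorm : ‖F.aeval (1 : ℤ_[p])‖ < ‖(derivative F).aeval (1 : ℤ_[p])‖ ^ 2 :=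
    calc ‖F.aeval (1 : ℤ_[p])‖ ≤ ‖(p : ℤ_[p])‖ ^ 3 := by
          simp only [F, map_sub, map_pow, aeval_X, aeval_C, one_pow, hc, Algebra.algebraMap_self,
            RingHom.id_apply]
          rw [sub_add_cancel_left, norm_neg, norm_mul, norm_pow]
          exact mul_le_of_le_one_right (by positivity) (PadicInt.norm_le_one c)
      _ < ‖(p : ℤ_[p])‖ ^ 2 := pow_lt_pow_right_of_lt_one₀ hp0 hp (by norm_num)
      _ ≤ ‖(derivative F).aeval (1 : ℤ_[p])‖ ^ 2 := by
          simp only [F, derivative_sub, derivative_X_pow, derivative_C, sub_zero, map_mul, aeval_C]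
          simpa using pow_le_pow_left₀ hp0.le h2 2
  obtain ⟨z, hz, -⟩ := hensels_lemma hnorm
  have hz2 : z ^ 2 = η := by simpa [F, sub_eq_zero] using hz
  obtain ⟨u, rfl⟩ := (isUnit_pow_iff two_ne_zero).1 (hz2 ▸ η.isUnit)
  exact ⟨u, Units.ext hz2⟩

theorem Subgroup.inf_ker_eq_of_le_zpowers_sup {G M : Type*} [CommGroup G] [Group M]
    (χ : G →* M) {U H : Subgroup G} {g : G} {N : ℕ} (hN : 0 < N) (hHU : H ≤ U)
    (hHχ : H ≤ χ.ker) (hU : U ≤ zpowers g ⊔ H) (hgN : g ^ N ∈ H)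
    (hmin : ∀ k : ℕ, 0 < k → (∀ x ∈ U, χ x ^ k = 1) → N ≤ k) :
    U ⊓ χ.ker = H := by
  have hdecomp {x : G} (hx : x ∈ U) : ∃ n : ℤ, ∃ h ∈ H, g ^ n * h = x := by
    obtain ⟨_, ⟨n, rfl⟩, h, hh, rfl⟩ := mem_sup.1 (hU hx)
    exact ⟨n, h, hh, rfl⟩
  have hχg : χ g ^ N = 1 := by rw [← map_pow]; exact hHχ hgN
  have hord : orderOf (χ g) = N := by
    refine le_antisymm (Nat.le_of_dvd hN (orderOf_dvd_of_pow_eq_one hχg)) (hmin _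
      (isOfFinOrder_iff_pow_eq_one.2 ⟨N, hN, hχg⟩).orderOf_pos fun x hx => ?_)
    obtain ⟨n, h, hh, rfl⟩ := hdecomp hx
    rw [map_mul, hHχ hh, mul_one, map_zpow, ← zpow_natCast, ← zpow_mul, mul_comm, zpow_mul,
      zpow_natCast, pow_orderOf_eq_one, one_zpow]
  refine le_antisymm ?_ (le_inf hHU hHχ)
  intro x hx
  obtain ⟨hxU, hxχ⟩ := Subgroup.mem_inf.1 hx
  obtain ⟨n, h, hh, rfl⟩ := hdecomp hxU
  rw [MonoidHom.mem_ker, map_mul, hHχ hh, mul_one, map_zpow,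
    ← orderOf_dvd_iff_zpow_eq_one, hord] at hxχ
  obtain ⟨m, rfl⟩ := hxχ
  rw [zpow_mul, zpow_natCast]
  exact mul_mem (zpow_mem hgN m) hh

section Decomposition

variable {p : ℕ} [Fact p.Prime] {A : Type} [CommRing A] [Algebra ℤ_[p] A]

theorem onePlusSubgroup_le_zpowers_sup [IsAdicComplete (Ideal.span {(p : A)}) A] {w : A}
    (hw : Submodule.span ℤ_[p] {1, w} = ⊤) {g : Aˣ} (hg : (g : A) = 1 + (p : A) ^ 3 * w)
    (k : ℕ) :
    onePlusSubgroup ((p : A) ^ (3 + k)) ≤ Subgroup.zpowers g ⊔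
      (onePlusSubgroup ((p : ℤ_[p]) ^ 3)).map (Units.map (algebraMap ℤ_[p] A).toMonoidHom) ⊔
      onePlusSubgroup ((p : A) ^ (3 + k + 1)) := by
  intro x ⟨a, ha⟩
  obtain ⟨s, t, hst⟩ := Submodule.mem_span_pair.1 (hw ▸ Submodule.mem_top : a ∈ _)
  obtain ⟨t₀, -, t', ht'⟩ : ∃ t₀ : ℕ, t₀ < p ∧ (p : ℤ_[p]) ∣ t - t₀ := by
    simpa [PadicInt.maximalIdeal_eq_span_p, Ideal.mem_span_singleton] using
      PadicInt.exists_mem_range (x := t)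
  have := PadicInt.isAdicComplete_span_natCast (p := p) ℤ_[p]
  obtain ⟨z, hz, hzs⟩ := exists_mem_onePlusSubgroup_pow_coe_eq
    (π := (p : ℤ_[p])) (n := 3 + k) (by omega) s
  obtain ⟨e, he⟩ := exists_one_add_pow_mul_pow_pow_eq p (m := 3) (by norm_num) w k
  obtain ⟨f, hf⟩ := exists_one_add_pow_eq ((p : A) ^ (3 + k) * (w + p * e)) t₀
  -- `x ≡ z · (g ^ p ^ k) ^ t₀ ≡ 1 + p ^ (3 + k) * (s + t₀ * w)` modulo `p ^ (4 + k)`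
  set v := Units.map (algebraMap ℤ_[p] A).toMonoidHom z * g ^ (p ^ k * t₀)
  have hv : x * v⁻¹ ∈ onePlusSubgroup ((p : A) ^ (3 + k + 1)) := by
    refine mul_inv_mem_onePlusSubgroup_iff.2 ⟨(algebraMap ℤ_[p] A t') * w - t₀ * e -
      (p : A) ^ (2 + k) * ((w + p * e) ^ 2 * f + algebraMap ℤ_[p] A s * t₀ * (w + p * e) +
        (p : A) ^ (3 + k) * algebraMap ℤ_[p] A s * (w + p * e) ^ 2 * f), ?_⟩
    have hs : (Units.map (algebraMap ℤ_[p] A).toMonoidHom z : A) =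
        1 + (p : A) ^ (3 + k) * algebraMap ℤ_[p] A s := by
      simp [hzs]
    have ht := congrArg (algebraMap ℤ_[p] A) (sub_eq_iff_eq_add'.1 ht')
    simp only [map_add, map_mul, map_natCast] at ht
    rw [ha, ← hst, Algebra.smul_def, Algebra.smul_def, mul_one, Units.val_mul, hs,
      Units.val_pow_eq_pow_val, pow_mul, hg, he, hf, ht]
    ring
  rw [← inv_mul_cancel_right x v]
  refine mul_mem (Subgroup.mem_sup_right hv) (mul_mem ?_ ?_)
  · exact Subgroup.mem_sup_left (Subgroup.mem_sup_right (Subgroup.mem_map_of_mem _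
      (onePlusSubgroup_pow_antitone _ (Nat.le_add_right 3 k) hz)))
  · exact Subgroup.mem_sup_left (Subgroup.mem_sup_left (Subgroup.pow_mem _
      (Subgroup.mem_zpowers g) _))

theorem onePlusSubgroup_three_le_zpowers_sup [IsAdicComplete (Ideal.span {(p : A)}) A] {w : A}
    (hw : Submodule.span ℤ_[p] {1, w} = ⊤) {g : Aˣ} (hg : (g : A) = 1 + (p : A) ^ 3 * w)
    (k : ℕ) :
    onePlusSubgroup ((p : A) ^ 3) ≤ Subgroup.zpowers g ⊔
      (onePlusSubgroup ((p : ℤ_[p]) ^ 3)).map (Units.map (algebraMap ℤ_[p] A).toMonoidHom) ⊔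
      onePlusSubgroup ((p : A) ^ (3 + k)) := by
  induction k with
  | zero => exact le_sup_right
  | succ k ih => exact ih.trans (sup_le le_sup_left (onePlusSubgroup_le_zpowers_sup hw hg k))

theorem onePlusSubgroup_inf_ker_eq {M : Type*} [Group M] {w : A}
    (hw : Submodule.span ℤ_[p] {1, w} = ⊤) (o : ℕ) (ε : Aˣ →* M)
    (hquad : ∀ u : ℤ_[p]ˣ, ε (Units.map (algebraMap ℤ_[p] A).toMonoidHom u) ^ 2 = 1)
    (hord₁ : ∀ x ∈ onePlusSubgroup ((p : A) ^ 3), ε x ^ (p ^ o) = 1)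
    (hord₂ : ∀ k : ℕ, 0 < k → (∀ x ∈ onePlusSubgroup ((p : A) ^ 3), ε x ^ k = 1) →
      p ^ o ≤ k) :
    onePlusSubgroup ((p : A) ^ 3) ⊓ ε.ker =
      (onePlusSubgroup ((p : ℤ_[p]) ^ 3)).map (Units.map (algebraMap ℤ_[p] A).toMonoidHom) ⊔
        onePlusSubgroup ((p : A) ^ (3 + o)) := by
  have : Module.Finite ℤ_[p] A :=
    Module.finite_def.2 (Submodule.fg_def.2 ⟨{1, w}, Set.toFinite _, hw⟩)
  have := PadicInt.isAdicComplete_span_natCast (p := p) A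
  obtain ⟨g, -, hg⟩ := exists_mem_onePlusSubgroup_pow_coe_eq (π := (p : A)) (n := 3)
    (by norm_num) w
  have hZ_le : (onePlusSubgroup ((p : ℤ_[p]) ^ 3)).map
      (Units.map (algebraMap ℤ_[p] A).toMonoidHom) ≤ onePlusSubgroup ((p : A) ^ 3) := by
    rintro _ ⟨η, ⟨c, hc⟩, rfl⟩
    exact ⟨algebraMap ℤ_[p] A c, by simp [hc]⟩
  have hZ_ker : (onePlusSubgroup ((p : ℤ_[p]) ^ 3)).map
      (Units.map (algebraMap ℤ_[p] A).toMonoidHom) ≤ ε.ker := by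
    rintro _ ⟨η, hη, rfl⟩
    obtain ⟨u, rfl⟩ := PadicInt.exists_sq_eq_of_mem_onePlusSubgroup hη
    rw [MonoidHom.mem_ker, map_pow, map_pow, hquad u]
  have hdeep_ker : onePlusSubgroup ((p : A) ^ (3 + o)) ≤ ε.ker := by
    intro ξ hξ
    obtain ⟨y, hy, rfl⟩ := exists_pow_pow_eq_of_mem_onePlusSubgroup p (by norm_num) o hξ
    rw [MonoidHom.mem_ker, map_pow]
    exact hord₁ y hy
  obtain ⟨e, he⟩ := exists_one_add_pow_mul_pow_pow_eq p (m := 3) (by norm_num) w o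
  refine Subgroup.inf_ker_eq_of_le_zpowers_sup ε (pow_pos (Fact.out : p.Prime).pos o)
    (sup_le hZ_le (onePlusSubgroup_pow_antitone _ (Nat.le_add_right 3 o)))
    (sup_le hZ_ker hdeep_ker) ?_
    (Subgroup.mem_sup_right ⟨w + p * e, by rw [Units.val_pow_eq_pow_val, hg, he]⟩) hord₂
  rw [← sup_assoc]
  exact onePlusSubgroup_three_le_zpowers_sup hw hg o

end Decomposition

theorem Submodule.span_one_pair_eq_top {R A : Type*} [CommRing R] [CommRing A] [Algebra R A]
    {u v : A} {a c : R} (huv : Submodule.span R {u, v} = ⊤) (h1 : a • u + c • v = 1)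
    (ha : IsUnit a) : Submodule.span R {1, v} = ⊤ := by
  obtain ⟨b, hb⟩ := ha.exists_left_inv
  rw [eq_top_iff, ← huv, Submodule.span_le]
  refine Set.insert_subset (Submodule.mem_span_pair.2 ⟨b, -(b * c), ?_⟩)
    (Set.singleton_subset_iff.2 (Submodule.subset_span (Set.mem_insert_of_mem _ rfl)))
  rw [← h1, smul_add, smul_smul, smul_smul, hb, one_smul, neg_smul, add_neg_cancel_right]

section TensorProduct

attribute [local instance] Algebra.TensorProduct.rightAlgebra

theorem TensorProduct.exists_span_one_pair_eq_top {p : ℕ} [Fact p.Prime] {B : Type} [CommRing B]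
    (e : Module.Basis (Fin 2) ℤ B) (hp : ¬IsUnit (p : B)) :
    ∃ w : B ⊗[ℤ] ℤ_[p], Submodule.span ℤ_[p] {1, w} = ⊤ := by
  let ibc := Algebra.IsPushout.out (R := ℤ) (S := ℤ_[p]) (R' := B) (S' := B ⊗[ℤ] ℤ_[p])
  let b := ibc.basis e
  have hspan : Submodule.span ℤ_[p] {b 0, b 1} = ⊤ :=
    eq_top_iff.2 fun x _ => Submodule.mem_span_pair.2
      ⟨_, _, by rw [← Fin.sum_univ_two (fun i => b.repr x i • b i), b.sum_repr]⟩
  have hone : (e.repr 1 0 : ℤ_[p]) • b 0 + (e.repr 1 1 : ℤ_[p]) • b 1 = 1 := by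
    have h (i : Fin 2) : b.repr 1 i = (e.repr 1 i : ℤ_[p]) := by
      simpa [← Algebra.TensorProduct.one_def] using ibc.basis_repr_comp_apply e 1 i
    rw [← h 0, ← h 1, ← Fin.sum_univ_two (fun i => b.repr 1 i • b i), b.sum_repr]
  have hunit {n : ℤ} (hn : ¬(p : ℤ) ∣ n) : IsUnit (n : ℤ_[p]) := by
    by_contra h
    exact hn (PadicInt.norm_intCast_lt_one_iff.1 (PadicInt.not_isUnit_iff.1 h))
  by_cases h0 : (p : ℤ) ∣ e.repr 1 0
  · have h1 : ¬(p : ℤ) ∣ e.repr 1 1 := by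
      rintro ⟨c₁, hc₁⟩
      obtain ⟨c₀, hc₀⟩ := h0
      refine hp (IsUnit.of_mul_eq_one (c₀ • e 0 + c₁ • e 1) ?_)
      conv_rhs => rw [← e.sum_repr 1, Fin.sum_univ_two, hc₀, hc₁]
      rw [mul_smul, mul_smul, ← smul_add, natCast_zsmul, nsmul_eq_mul]
    exact ⟨b 0, Submodule.span_one_pair_eq_top (Set.pair_comm (b 0) (b 1) ▸ hspan)
      (by rw [add_comm]; exact hone) (hunit h1)⟩
  · exact ⟨b 1, Submodule.span_one_pair_eq_top hspan hone (hunit h0)⟩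

end TensorProduct

theorem NumberField.RingOfIntegers.not_isUnit_natCast_of_prime (K : Type*) [Field K]
    [NumberField K] {p : ℕ} (hp : p.Prime) : ¬IsUnit (p : 𝓞 K) := by
  rw [← map_natCast (algebraMap ℤ (𝓞 K)), isUnit_map_iff, Int.isUnit_iff]
  have := hp.two_le
  omega

theorem kernel_of_eps_on_onePlus_general
    (K : IntermediateField ℚ ℂ) [NumberField ↥K]
    (hdeg : Module.finrank ℚ ↥K = 2)
    (p : ℕ) [Fact p.Prime] (o : ℕ)
    (ε : ((𝓞 ↥K) ⊗[ℤ] ℤ_[p])ˣ →* ℂˣ)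
    -- ε is quadratic on ℤ_pˣ (viewed inside O_pˣ)
    (hquad : ∀ u : ℤ_[p]ˣ,
      (ε (Units.map ((Algebra.TensorProduct.includeRight :
        ℤ_[p] →ₐ[ℤ] (𝓞 ↥K) ⊗[ℤ] ℤ_[p]).toRingHom.toMonoidHom) u)) ^ 2 = 1)
    (U3 : Subgroup ((𝓞 ↥K) ⊗[ℤ] ℤ_[p])ˣ)
    (hU3 : U3 = onePlusSubgroup ((p : (𝓞 ↥K) ⊗[ℤ] ℤ_[p]) ^ 3))
    (UZ3 : Subgroup ((𝓞 ↥K) ⊗[ℤ] ℤ_[p])ˣ)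
    (hUZ3 : UZ3 = Subgroup.map
      (Units.map ((Algebra.TensorProduct.includeRight :
        ℤ_[p] →ₐ[ℤ] (𝓞 ↥K) ⊗[ℤ] ℤ_[p]).toRingHom.toMonoidHom))
      (onePlusSubgroup ((p : ℤ_[p]) ^ 3)))
    (U3o : Subgroup ((𝓞 ↥K) ⊗[ℤ] ℤ_[p])ˣ)
    (hU3o : U3o = onePlusSubgroup ((p : (𝓞 ↥K) ⊗[ℤ] ℤ_[p]) ^ (3 + o)))
    -- the restriction of ε to 1 + p³O_p has order exactly p^o
    (hord₁ : ∀ x ∈ U3, ε x ^ (p ^ o) = 1)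
    (hord₂ : ∀ k : ℕ, 0 < k → (∀ x ∈ U3, ε x ^ k = 1) → p ^ o ≤ k) :
    U3 ⊓ ε.ker = UZ3 ⊔ U3o := by
  subst hU3 hUZ3 hU3o
  let _ := Algebra.TensorProduct.rightAlgebra (R := ℤ) (A := 𝓞 K) (B := ℤ_[p])
  let e : Module.Basis (Fin 2) ℤ (𝓞 K) :=
    Module.finBasisOfFinrankEq ℤ (𝓞 K) (by rw [NumberField.RingOfIntegers.rank, hdeg])
  obtain ⟨w, hw⟩ := TensorProduct.exists_span_one_pair_eq_top e
    (NumberField.RingOfIntegers.not_isUnit_natCast_of_prime K (Fact.out : p.Prime))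
  exact onePlusSubgroup_inf_ker_eq hw o ε hquad hord₁ hord₂

/-- Let `K` be an imaginary quadratic field, `p` a prime, `O_p = O ⊗ ℤ_p`,
and `ε : O_pˣ → ℂˣ` a homomorphism which is quadratic on `ℤ_pˣ` and whose restriction to
`1 + p³O_p` has order exactly `p^o`.  Then the kernel of `ε` inside `1 + p³O_p` is exactly
`(1 + p³ℤ_p)·(1 + p^{3+o}O_p)`. -/
theorem kernel_of_eps_on_onePlus
    (K : IntermediateField ℚ ℂ) [NumberField ↥K]
    (hdeg : Module.finrank ℚ ↥K = 2) (himag : ∃ x : ↥K, (x : ℂ).im ≠ 0)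
    (p : ℕ) [Fact p.Prime] (o : ℕ)
    (ε : ((𝓞 ↥K) ⊗[ℤ] ℤ_[p])ˣ →* ℂˣ)
    -- ε is quadratic on ℤ_pˣ (viewed inside O_pˣ)
    (hquad : ∀ u : ℤ_[p]ˣ,
      (ε (Units.map ((Algebra.TensorProduct.includeRight :
        ℤ_[p] →ₐ[ℤ] (𝓞 ↥K) ⊗[ℤ] ℤ_[p]).toRingHom.toMonoidHom) u)) ^ 2 = 1)
    (U3 : Subgroup ((𝓞 ↥K) ⊗[ℤ] ℤ_[p])ˣ)
    (hU3 : U3 = onePlusSubgroup ((p : (𝓞 ↥K) ⊗[ℤ] ℤ_[p]) ^ 3))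
    (UZ3 : Subgroup ((𝓞 ↥K) ⊗[ℤ] ℤ_[p])ˣ)
    (hUZ3 : UZ3 = Subgroup.map
      (Units.map ((Algebra.TensorProduct.includeRight :
        ℤ_[p] →ₐ[ℤ] (𝓞 ↥K) ⊗[ℤ] ℤ_[p]).toRingHom.toMonoidHom))
      (onePlusSubgroup ((p : ℤ_[p]) ^ 3)))
    (U3o : Subgroup ((𝓞 ↥K) ⊗[ℤ] ℤ_[p])ˣ)
    (hU3o : U3o = onePlusSubgroup ((p : (𝓞 ↥K) ⊗[ℤ] ℤ_[p]) ^ (3 + o)))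
    -- the restriction of ε to 1 + p³O_p has order exactly p^o
    (hord₁ : ∀ x ∈ U3, ε x ^ (p ^ o) = 1)
    (hord₂ : ∀ k : ℕ, 0 < k → (∀ x ∈ U3, ε x ^ k = 1) → p ^ o ≤ k) :
    U3 ⊓ ε.ker = UZ3 ⊔ U3o :=
  kernel_of_eps_on_onePlus_general K hdeg p o ε hquad U3 hU3 UZ3 hUZ3 U3o hU3o hord₁ hord₂
end

section
/- Let K be an imaginary quadratic field with ring of integers O, p a rational prime, O_p = O ⊗_ℤ ℤ_p, and τ ∈ O such that {1, τ} is a ℤ-basis of O (so {1, τ⊗1} is a ℤ_p-basis of O_p). Let h be a positive integer and w_0 ∈ O a nonzero element whose image in O_p is a unit. Let x ∈ S_p and ω ∈ H_p, and write ωx = α + β·(τ⊗1) with α, β ∈ ℤ_p. Then there exist η ∈ ℤ_p^× and elements α', β' ∈ ℤ_p that are algebraic over ℚ such that α = ηα' and β = ηβ'. -/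
open NumberField
open scoped TensorProduct

variable (K : IntermediateField ℚ ℂ) [NumberField ↥K] (p : ℕ) [Fact p.Prime]

/-- `O_p = O ⊗_ℤ ℤ_p`. -/
abbrev Op : Type _ := (𝓞 ↥K) ⊗[ℤ] ℤ_[p]

/-- The natural map `O → O_p`. -/
noncomputable def incL : 𝓞 ↥K →+* Op K p :=
  (Algebra.TensorProduct.includeLeft : 𝓞 ↥K →ₐ[ℤ] (𝓞 ↥K) ⊗[ℤ] ℤ_[p]).toRingHom

/-- The natural map `ℤ_p → O_p`. -/
noncomputable def incR : ℤ_[p] →+* Op K p :=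
  (Algebra.TensorProduct.includeRight : ℤ_[p] →ₐ[ℤ] (𝓞 ↥K) ⊗[ℤ] ℤ_[p]).toRingHom

/-- `ℤ_pˣ` regarded as a subgroup of `O_pˣ`. -/
noncomputable def ZpUnits : Subgroup (Op K p)ˣ :=
  (Units.map (incR K p).toMonoidHom).range

/-- `H_p = {a ∈ O_pˣ : a^m ∈ ℤ_pˣ for some positive integer m}`. -/
noncomputable def Hp : Set (Op K p)ˣ :=
  {a : (Op K p)ˣ | ∃ m : ℕ, 0 < m ∧ a ^ m ∈ ZpUnits K p}

/-! Put `y = ωx`. Since `x ∈ S_p` and `ω ∈ H_p`, some `y^N · w₀^m` with `N > 0` lies in `ℤ_pˣ`.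
Two ring maps `σ₁, σ₂ : O_p → ℚ̄_p` that agree on `ℤ_p` but send `τ` to distinct conjugates
`τ₁ ≠ τ₂` give `(α + βτ₁)^N σ₁(w₀)^m = (α + βτ₂)^N σ₂(w₀)^m`. Hence `r = (α + βτ₁)/(α + βτ₂)` has an
algebraic power, so `r` is algebraic, and `r ≠ 1`; solving for `α/β` shows that it is algebraic.
Finally, with `β = η p^v` and `η ∈ ℤ_pˣ`, take `α' = (α/β) p^v` and `β' = p^v`. -/

theorem isAlgebraic_div_of_pow_mul_eq {F Ω : Type*} [Field F] [Field Ω] [Algebra F Ω]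
    {a b t₁ t₂ c₁ c₂ : Ω} {N : ℕ} (hN : 0 < N) (hb : b ≠ 0) (ht : t₁ ≠ t₂)
    (hu : a + b * t₂ ≠ 0) (hc : c₁ ≠ 0) (ht₁ : IsAlgebraic F t₁) (ht₂ : IsAlgebraic F t₂)
    (hc₁ : IsAlgebraic F c₁) (hc₂ : IsAlgebraic F c₂)
    (h : (a + b * t₁) ^ N * c₁ = (a + b * t₂) ^ N * c₂) : IsAlgebraic F (a / b) := by
  set r := (a + b * t₁) / (a + b * t₂) with hr_def
  have hr : IsAlgebraic F r := by
    have hrN : r ^ N = c₂ / c₁ := by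
      rw [div_pow, div_eq_div_iff (pow_ne_zero _ hu) hc, h, mul_comm]
    exact .of_pow hN (hrN ▸ div_eq_mul_inv c₂ c₁ ▸ hc₂.mul hc₁.inv)
  have hr1 : 1 - r ≠ 0 := by
    rw [sub_ne_zero, ne_comm, Ne, div_eq_one_iff_eq hu]
    exact fun h' ↦ ht (mul_left_cancel₀ hb (add_left_cancel h'))
  have hab : a / b = (r * t₂ - t₁) / (1 - r) := by
    rw [div_eq_div_iff hb hr1, hr_def]
    field_simp
    ring
  rw [hab, div_eq_mul_inv]
  exact ((hr.mul ht₂).sub ht₁).mul (isAlgebraic_one.sub hr).inv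

theorem exists_algHom_apply_ne {F K Ω : Type*} [Field F] [Field K] [Field Ω] [Algebra F K]
    [Algebra F Ω] [Algebra.IsAlgebraic F K] [PerfectField F] [IsAlgClosed Ω] {x : K}
    (hx : x ∉ Set.range (algebraMap F K)) : ∃ ψ₁ ψ₂ : K →ₐ[F] Ω, ψ₁ x ≠ ψ₂ x := by
  have hint : IsIntegral F x := Algebra.IsIntegral.isIntegral x
  have hdeg : 1 < (minpoly F x).natDegree := by
    have := minpoly.natDegree_pos hint
    have := mt minpoly.natDegree_eq_one_iff.mp hx
    omega
  have hcard : 1 < Fintype.card ((minpoly F x).rootSet Ω) := by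
    rw [Polynomial.card_rootSet_eq_natDegree (PerfectField.separable_of_irreducible
      (minpoly.irreducible hint)) (IsAlgClosed.splits _)]
    exact hdeg
  obtain ⟨⟨_, ha⟩, ⟨_, hb⟩, hab⟩ := Fintype.exists_pair_of_one_lt_card hcard
  rw [← Algebra.IsAlgebraic.range_eval_eq_rootSet_minpoly] at ha hb
  obtain ⟨ψ₁, rfl⟩ := ha
  obtain ⟨ψ₂, rfl⟩ := hb
  exact ⟨ψ₁, ψ₂, fun h ↦ hab (Subtype.ext h)⟩

namespace PadicInt

variable {p}

theorem isAlgebraic_int_iff_isAlgebraic_rat {x : ℤ_[p]} :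
    IsAlgebraic ℤ x ↔ IsAlgebraic ℚ (x : ℚ_[p]) := by
  rw [← IsFractionRing.isAlgebraic_iff ℤ ℚ]
  exact (isAlgebraic_algHom_iff (Coe.ringHom (p := p)).toIntAlgHom
    Subtype.coe_injective).symm

theorem exists_eq_unit_mul_isAlgebraic (x : ℤ_[p]) :
    ∃ (η : ℤ_[p]ˣ) (x' : ℤ_[p]), IsAlgebraic ℤ x' ∧ x = η * x' := by
  rcases eq_or_ne x 0 with rfl | hx
  · exact ⟨1, 0, isAlgebraic_zero, by simp⟩
  · exact ⟨unitCoeff hx, _, (isAlgebraic_natCast p).pow _, unitCoeff_spec hx⟩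

theorem exists_eq_unit_mul_isAlgebraic_of_div {α β : ℤ_[p]} (hβ : β ≠ 0)
    (h : IsAlgebraic ℚ ((α : ℚ_[p]) / β)) :
    ∃ (η : ℤ_[p]ˣ) (α' β' : ℤ_[p]), IsAlgebraic ℤ α' ∧ IsAlgebraic ℤ β' ∧
      α = η * α' ∧ β = η * β' := by
  set η := unitCoeff hβ
  set v := β.valuation
  have hβη : β = η * (p : ℤ_[p]) ^ v := unitCoeff_spec hβ
  refine ⟨η, ↑η⁻¹ * α, _, ?_, ?_, by simp, hβη⟩
  · rw [isAlgebraic_int_iff_isAlgebraic_rat]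
    have : ((↑η⁻¹ * α : ℤ_[p]) : ℚ_[p]) = α / β * (p : ℚ_[p]) ^ v := by
      have hη : ((η : ℤ_[p]) : ℚ_[p]) * ((↑η⁻¹ : ℤ_[p]) : ℚ_[p]) = 1 := by
        rw [← coe_mul, η.mul_inv, coe_one]
      have hp : (p : ℚ_[p]) ≠ 0 := Nat.cast_ne_zero.mpr (Fact.out : p.Prime).ne_zero
      rw [hβη]
      push_cast
      field_simp
      linear_combination (α : ℚ_[p]) * hη
    rw [this]
    exact h.mul ((isAlgebraic_algebraMap (p : ℚ)).pow _)
  · exact (isAlgebraic_natCast p).pow _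

end PadicInt

noncomputable def liftOp {Ω : Type*} [CommRing Ω] (σ : 𝓞 ↥K →+* Ω) (g : ℤ_[p] →+* Ω) :
    Op K p →+* Ω :=
  (Algebra.TensorProduct.lift σ.toIntAlgHom g.toIntAlgHom fun _ _ ↦ .all _ _).toRingHom

omit [NumberField ↥K] in
@[simp]
theorem liftOp_incL {Ω : Type*} [CommRing Ω] (σ : 𝓞 ↥K →+* Ω) (g : ℤ_[p] →+* Ω) (z : 𝓞 ↥K) :
    liftOp K p σ g (incL K p z) = σ z := by
  simp [liftOp, incL]

omit [NumberField ↥K] in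
@[simp]
theorem liftOp_incR {Ω : Type*} [CommRing Ω] (σ : 𝓞 ↥K →+* Ω) (g : ℤ_[p] →+* Ω) (c : ℤ_[p]) :
    liftOp K p σ g (incR K p c) = g c := by
  simp [liftOp, incR]

section

variable {K p}

omit [NumberField ↥K] in
theorem coe_notMem_range_algebraMap_of_existsUnique_repr {τ : 𝓞 ↥K}
    (hτ : ∀ z : 𝓞 ↥K, ∃! c : ℤ × ℤ, z = (c.1 : 𝓞 ↥K) + (c.2 : 𝓞 ↥K) * τ) :
    (τ : ↥K) ∉ Set.range (algebraMap ℚ ↥K) := by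
  rintro ⟨q, hq⟩
  have hnum : τ * q.den = q.num := RingOfIntegers.coe_injective <| by
    have := congrArg (algebraMap ℚ ↥K) (Rat.mul_den_eq_num q)
    push_cast
    rwa [map_mul, map_natCast, map_intCast, hq] at this
  have h0 := (hτ 0).unique (y₁ := (q.num, -q.den)) (y₂ := (0, 0))
    (by push_cast; linear_combination hnum) (by simp)
  simp at h0

omit [NumberField ↥K] in
theorem mul_mem_Hp {a b : (Op K p)ˣ} (ha : a ∈ Hp K p) (hb : b ∈ Hp K p) : a * b ∈ Hp K p := by
  obtain ⟨m, hm, ham⟩ := ha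
  obtain ⟨n, hn, hbn⟩ := hb
  refine ⟨m * n, Nat.mul_pos hm hn, ?_⟩
  convert mul_mem (pow_mem ham n) (pow_mem hbn m) using 1
  rw [← pow_mul, ← pow_mul, mul_comm n m]
  exact mul_pow a b _

omit [NumberField ↥K] in
theorem pow_mem_Hp {a : (Op K p)ˣ} (ha : a ∈ Hp K p) (n : ℕ) : a ^ n ∈ Hp K p := by
  obtain ⟨m, hm, ham⟩ := ha
  exact ⟨m, hm, by rw [← pow_mul, pow_mul']; exact pow_mem ham n⟩

theorem isAlgebraic_coeff_div_of_pow_mul_mem_Hp {τ : 𝓞 ↥K}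
    (hτ : (τ : ↥K) ∉ Set.range (algebraMap ℚ ↥K)) {w₀ : 𝓞 ↥K} {u₀ : (Op K p)ˣ}
    (hu₀ : (u₀ : Op K p) = incL K p w₀) {y : (Op K p)ˣ} {h : ℕ}
    (hh : 0 < h) (hy : y ^ h * u₀ ∈ Hp K p) {α β : ℤ_[p]} (hβ : β ≠ 0)
    (hαβ : (y : Op K p) = incR K p α + incR K p β * incL K p τ) :
    IsAlgebraic ℚ ((α : ℚ_[p]) / β) := by
  obtain ⟨m, hm, ζ, hζ⟩ := hy
  let Ω := AlgebraicClosure ℚ_[p]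
  let g : ℤ_[p] →+* Ω := (algebraMap ℚ_[p] Ω).comp PadicInt.Coe.ringHom
  let φ (ψ : ↥K →ₐ[ℚ] Ω) : Op K p →+* Ω := liftOp K p ((ψ : ↥K →+* Ω).comp (algebraMap _ _)) g
  have hφy (ψ : ↥K →ₐ[ℚ] Ω) : φ ψ y = g α + g β * ψ τ := by simp [φ, hαβ]
  have hφu₀ (ψ : ↥K →ₐ[ℚ] Ω) : φ ψ u₀ = ψ w₀ := by simp [φ, hu₀]
  have hrel (ψ : ↥K →ₐ[ℚ] Ω) : g ζ = (g α + g β * ψ τ) ^ (h * m) * (ψ w₀) ^ m := by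
    have := congrArg (fun z : (Op K p)ˣ ↦ φ ψ z) hζ
    simpa [φ, pow_mul, mul_pow, hφy, hφu₀] using this
  obtain ⟨ψ₁, ψ₂, hψ⟩ := exists_algHom_apply_ne (Ω := Ω) hτ
  have hinj : Function.Injective (algebraMap ℚ_[p] Ω) := (algebraMap ℚ_[p] Ω).injective
  have hb : g β ≠ 0 := (map_ne_zero_iff g (hinj.comp Subtype.coe_injective)).mpr hβ
  have halg (ψ : ↥K →ₐ[ℚ] Ω) (z : ↥K) : IsAlgebraic ℚ (ψ z) :=
    (Algebra.IsAlgebraic.isAlgebraic z).algHom ψ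
  rw [← isAlgebraic_algHom_iff (algebraMap ℚ_[p] Ω).toRatAlgHom hinj]
  change IsAlgebraic ℚ (algebraMap ℚ_[p] Ω (α / β))
  rw [map_div₀]
  refine isAlgebraic_div_of_pow_mul_eq (Nat.mul_pos hh hm) hb hψ ?_ ?_ (halg ψ₁ _) (halg ψ₂ _)
    ((halg ψ₁ _).pow m) ((halg ψ₂ _).pow m) ((hrel ψ₁).symm.trans (hrel ψ₂))
  · exact hφy ψ₂ ▸ (y.isUnit.map (φ ψ₂)).ne_zero
  · exact pow_ne_zero _ (hφu₀ ψ₁ ▸ (u₀.isUnit.map (φ ψ₁)).ne_zero)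

end

theorem coords_are_unit_times_algebraic
    (τ : 𝓞 ↥K) (hτ : ∀ z : 𝓞 ↥K, ∃! c : ℤ × ℤ, z = (c.1 : 𝓞 ↥K) + (c.2 : 𝓞 ↥K) * τ)
    (h : ℕ) (hh : 0 < h)
    (w₀ : 𝓞 ↥K)
    (u₀ : (Op K p)ˣ) (hu₀ : (u₀ : Op K p) = incL K p w₀)
    -- `x ∈ S_p`, i.e. `x^h ∈ H_p·w₀⁻¹`
    (x : (Op K p)ˣ) (hx : x ^ h * u₀ ∈ Hp K p)
    (ω : (Op K p)ˣ) (hω : ω ∈ Hp K p)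
    (α β : ℤ_[p])
    (hαβ : ((ω * x : (Op K p)ˣ) : Op K p)
      = incR K p α + incR K p β * incL K p τ) :
    ∃ (η : ℤ_[p]ˣ) (α' β' : ℤ_[p]), IsAlgebraic ℤ α' ∧ IsAlgebraic ℤ β' ∧
      α = (η : ℤ_[p]) * α' ∧ β = (η : ℤ_[p]) * β' := by
  rcases eq_or_ne β 0 with rfl | hβ
  · obtain ⟨η, α', hα', rfl⟩ := PadicInt.exists_eq_unit_mul_isAlgebraic α
    exact ⟨η, α', 0, hα', isAlgebraic_zero, rfl, by simp⟩
  have hy : (ω * x) ^ h * u₀ ∈ Hp K p := by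
    convert mul_mem_Hp (pow_mem_Hp hω h) hx using 1
    rw [← mul_assoc]
    exact congrArg (· * u₀) (mul_pow ω x h)
  exact PadicInt.exists_eq_unit_mul_isAlgebraic_of_div hβ <|
    isAlgebraic_coeff_div_of_pow_mul_mem_Hp (coe_notMem_range_algebraMap_of_existsUnique_repr hτ)
      hu₀ hh hy hβ hαβ
end

section
/- Let P be a finite set of rational primes, and for each p ∈ P let γ_p ∈ ℚ_p be algebraic over ℚ. Let κ > 2 be a real number. Suppose that there are only finitely many pairs of coprime rational integers (u, v) satisfying ∏_{p∈P} |u − vγ_p|_p ≤ (max(|u|,|v|))^{−κ}. Then there exists a constant k > 0 such that ∏_{p∈P} |u − vγ_p|_p > k·(max(|u|,|v|))^{−κ} for all pairs of rational integers (u, v), not both zero, for which ∏_{p∈P} |u − vγ_p|_p ≠ 0. -/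
instance (p : Nat.Primes) : Fact (p : ℕ).Prime := ⟨p.2⟩

/-!
Write a nonzero pair as `(u, v) = d • (u', v')` with `d = gcd u v` and `(u', v')` coprime. The
`p`-adic factors of `d` over `p ∈ P` multiply to at least `1 / d`, while the height scales by `d`;
since `κ ≥ 1`, `d ^ (-κ) ≤ 1 / d`, so a bound for the coprime pair `(u', v')` gives the same bound
for `(u, v)`. For coprime pairs, `k` is taken below `1` and below the ratios
`∏ |u - vγ_p|_p · max(|u|, |v|) ^ κ` of the finitely many exceptional pairs.
-/

open Filter Topology

namespace Padic

lemma norm_natCast_eq_inv_ordProj (p : Nat.Primes) {d : ℕ} (hd : d ≠ 0) :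
    ‖(d : ℚ_[(p : ℕ)])‖ = ((ordProj[(p : ℕ)] d : ℕ) : ℝ)⁻¹ := by
  rw [norm_eq_zpow_neg_valuation (Nat.cast_ne_zero.2 hd), valuation_natCast,
    ← Nat.factorization_def d p.2, zpow_neg, zpow_natCast, Nat.cast_pow]

end Padic

lemma Nat.prod_ordProj_dvd (P : Finset Nat.Primes) (d : ℕ) :
    ∏ p ∈ P, ordProj[(p : ℕ)] d ∣ d := by
  induction P using Finset.induction_on with
  | empty => simp
  | insert p P hp ih =>
    rw [Finset.prod_insert hp]
    refine Nat.Coprime.mul_dvd_of_dvd_of_dvd ?_ (Nat.ordProj_dvd d p) ih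
    refine Nat.Coprime.prod_right fun q hq => Nat.coprime_pow_primes _ _ p.2 q.2 ?_
    intro hpq
    exact hp (Subtype.ext hpq ▸ hq)

lemma inv_natCast_le_prod_norm_padic (P : Finset Nat.Primes) {d : ℕ} (hd : d ≠ 0) :
    (d : ℝ)⁻¹ ≤ ∏ p ∈ P, ‖(d : ℚ_[(p : ℕ)])‖ := by
  rw [Finset.prod_congr rfl fun p _ => Padic.norm_natCast_eq_inv_ordProj p hd,
    Finset.prod_inv_distrib, ← Nat.cast_prod]
  have hpos : 0 < ∏ p ∈ P, ordProj[(p : ℕ)] d :=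
    Finset.prod_pos fun p _ => pow_pos p.2.pos _
  exact inv_anti₀ (by exact_mod_cast hpos)
    (by exact_mod_cast Nat.le_of_dvd (Nat.pos_of_ne_zero hd) (Nat.prod_ordProj_dvd P d))

section LinearForm

variable (P : Finset Nat.Primes) (γ : (p : Nat.Primes) → ℚ_[(p : ℕ)])

noncomputable def prodNormLinearForm (u v : ℤ) : ℝ :=
  ∏ p ∈ P, ‖(u : ℚ_[(p : ℕ)]) - (v : ℚ_[(p : ℕ)]) * γ p‖

def pairHeight (u v : ℤ) : ℝ := max (|u| : ℝ) (|v| : ℝ)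

lemma prodNormLinearForm_nonneg (u v : ℤ) : 0 ≤ prodNormLinearForm P γ u v :=
  Finset.prod_nonneg fun _ _ => norm_nonneg _

lemma prodNormLinearForm_mul_natCast (u v : ℤ) (d : ℕ) :
    prodNormLinearForm P γ (u * d) (v * d) =
      prodNormLinearForm P γ u v * ∏ p ∈ P, ‖(d : ℚ_[(p : ℕ)])‖ := by
  simp only [prodNormLinearForm, ← Finset.prod_mul_distrib, ← norm_mul]
  exact Finset.prod_congr rfl fun p _ => by push_cast; ring_nf

lemma pairHeight_pos {u v : ℤ} (huv : ¬(u = 0 ∧ v = 0)) : 0 < pairHeight u v := by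
  rcases not_and_or.1 huv with hu | hv
  · exact lt_max_of_lt_left (abs_pos.2 (Int.cast_ne_zero.2 hu))
  · exact lt_max_of_lt_right (abs_pos.2 (Int.cast_ne_zero.2 hv))

lemma pairHeight_mul_natCast (u v : ℤ) (d : ℕ) :
    pairHeight (u * d) (v * d) = pairHeight u v * d := by
  simp only [pairHeight, Int.cast_mul, Int.cast_natCast, abs_mul, Nat.abs_cast,
    max_mul_of_nonneg _ _ (Nat.cast_nonneg d)]

variable {P γ} {κ : ℝ}

lemma exists_lower_bound_of_coprime
    (hfin : {uv : ℤ × ℤ | Int.gcd uv.1 uv.2 = 1 ∧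
      prodNormLinearForm P γ uv.1 uv.2 ≤ pairHeight uv.1 uv.2 ^ (-κ)}.Finite) :
    ∃ k : ℝ, 0 < k ∧ ∀ u v : ℤ, Int.gcd u v = 1 → prodNormLinearForm P γ u v ≠ 0 →
      k * pairHeight u v ^ (-κ) < prodNormLinearForm P γ u v := by
  set S := {uv : ℤ × ℤ | Int.gcd uv.1 uv.2 = 1 ∧
      prodNormLinearForm P γ uv.1 uv.2 ≤ pairHeight uv.1 uv.2 ^ (-κ)}
  have hne : ∀ {u v : ℤ}, Int.gcd u v = 1 → ¬(u = 0 ∧ v = 0) := by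
    rintro u v h ⟨rfl, rfl⟩
    simp at h
  have hS : ∀ uv ∈ S, prodNormLinearForm P γ uv.1 uv.2 ≠ 0 →
      0 < prodNormLinearForm P γ uv.1 uv.2 * pairHeight uv.1 uv.2 ^ κ := by
    intro uv huv hL
    have hH : 0 < pairHeight uv.1 uv.2 := pairHeight_pos (hne huv.1)
    exact mul_pos ((prodNormLinearForm_nonneg P γ _ _).lt_of_ne' hL) (Real.rpow_pos_of_pos hH κ)
  have hev : ∀ᶠ k in 𝓝[>] (0 : ℝ), 0 < k ∧ k < 1 ∧ ∀ uv ∈ S,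
      prodNormLinearForm P γ uv.1 uv.2 ≠ 0 →
        k < prodNormLinearForm P γ uv.1 uv.2 * pairHeight uv.1 uv.2 ^ κ := by
    refine eventually_mem_nhdsWithin.and
      ((eventually_nhdsWithin_of_eventually_nhds (eventually_lt_nhds one_pos)).and ?_)
    refine (hfin.eventually_all).2 fun uv huv => ?_
    by_cases hL : prodNormLinearForm P γ uv.1 uv.2 = 0
    · exact Eventually.of_forall fun _ h => absurd hL h
    · exact (eventually_nhdsWithin_of_eventually_nhds (eventually_lt_nhds (hS uv huv hL))).mono
        fun _ hk _ => hk
  obtain ⟨k, hk0, hk1, hkS⟩ := hev.exists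
  refine ⟨k, hk0, fun u v huv hL => ?_⟩
  have hH : 0 < pairHeight u v := pairHeight_pos (hne huv)
  have hHκ : 0 < pairHeight u v ^ (-κ) := Real.rpow_pos_of_pos hH _
  by_cases hmem : (u, v) ∈ S
  · calc k * pairHeight u v ^ (-κ)
        < prodNormLinearForm P γ u v * pairHeight u v ^ κ * pairHeight u v ^ (-κ) :=
          mul_lt_mul_of_pos_right (hkS (u, v) hmem hL) hHκ
      _ = prodNormLinearForm P γ u v := by
          rw [mul_assoc, ← Real.rpow_add hH, add_neg_cancel, Real.rpow_zero, mul_one]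
  · have hlt : pairHeight u v ^ (-κ) < prodNormLinearForm P γ u v :=
      lt_of_not_ge fun hle => hmem ⟨huv, hle⟩
    calc k * pairHeight u v ^ (-κ) < 1 * pairHeight u v ^ (-κ) :=
          mul_lt_mul_of_pos_right hk1 hHκ
      _ < prodNormLinearForm P γ u v := by rwa [one_mul]

lemma lower_bound_of_lower_bound_coprime (hκ : 1 ≤ κ) {k : ℝ} (hk : 0 ≤ k)
    (hcop : ∀ u v : ℤ, Int.gcd u v = 1 → prodNormLinearForm P γ u v ≠ 0 →
      k * pairHeight u v ^ (-κ) < prodNormLinearForm P γ u v)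
    {u v : ℤ} (huv : ¬(u = 0 ∧ v = 0)) (hL : prodNormLinearForm P γ u v ≠ 0) :
    k * pairHeight u v ^ (-κ) < prodNormLinearForm P γ u v := by
  obtain ⟨d, u, v, hd, huv', rfl, rfl⟩ :=
    Int.exists_gcd_one' (Int.gcd_pos_iff.2 (not_and_or.1 huv))
  rw [prodNormLinearForm_mul_natCast] at hL ⊢
  rw [pairHeight_mul_natCast]
  have hH : 0 < pairHeight u v := pairHeight_pos fun h => by simp [h.1, h.2] at huv'
  have hd1 : (1 : ℝ) ≤ d := by exact_mod_cast hd
  have hdκ : (d : ℝ) ^ (-κ) ≤ (d : ℝ)⁻¹ := by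
    simpa only [Real.rpow_neg_one] using Real.rpow_le_rpow_of_exponent_le hd1 (neg_le_neg hκ)
  calc k * (pairHeight u v * d) ^ (-κ)
      = k * pairHeight u v ^ (-κ) * (d : ℝ) ^ (-κ) := by
        rw [Real.mul_rpow hH.le (by positivity), mul_assoc]
    _ ≤ k * pairHeight u v ^ (-κ) * (d : ℝ)⁻¹ := by gcongr
    _ < prodNormLinearForm P γ u v * (d : ℝ)⁻¹ :=
        mul_lt_mul_of_pos_right (hcop u v huv' (left_ne_zero_of_mul hL)) (by positivity)
    _ ≤ prodNormLinearForm P γ u v * ∏ p ∈ P, ‖(d : ℚ_[(p : ℕ)])‖ :=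
        mul_le_mul_of_nonneg_left (inv_natCast_le_prod_norm_padic P hd.ne')
          (prodNormLinearForm_nonneg P γ u v)

end LinearForm

theorem ridout_consequence_general
    (P : Finset Nat.Primes) (γ : (p : Nat.Primes) → ℚ_[(p : ℕ)])
    (κ : ℝ) (hκ : 2 < κ)
    (hfin : {uv : ℤ × ℤ | Int.gcd uv.1 uv.2 = 1 ∧
      (∏ p ∈ P, ‖(uv.1 : ℚ_[(p : ℕ)]) - (uv.2 : ℚ_[(p : ℕ)]) * γ p‖) ≤
        (max (|uv.1| : ℝ) (|uv.2| : ℝ)) ^ (-κ)}.Finite) :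
    ∃ k : ℝ, 0 < k ∧ ∀ u v : ℤ, ¬ (u = 0 ∧ v = 0) →
      (∏ p ∈ P, ‖(u : ℚ_[(p : ℕ)]) - (v : ℚ_[(p : ℕ)]) * γ p‖) ≠ 0 →
      k * (max (|u| : ℝ) (|v| : ℝ)) ^ (-κ) <
        ∏ p ∈ P, ‖(u : ℚ_[(p : ℕ)]) - (v : ℚ_[(p : ℕ)]) * γ p‖ := by
  obtain ⟨k, hk, hcop⟩ := exists_lower_bound_of_coprime hfin
  exact ⟨k, hk, fun u v huv hL =>
    lower_bound_of_lower_bound_coprime (by linarith) hk.le hcop huv hL⟩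

/-- Let `P` be a finite set of primes and `γ_p ∈ ℚ_p` algebraic over `ℚ`
for `p ∈ P`, and `κ > 2`.  If only finitely many coprime pairs `(u, v)` satisfy
`∏_{p∈P} |u − vγ_p|_p ≤ max(|u|,|v|)^{−κ}`, then there is `k > 0` with
`∏_{p∈P} |u − vγ_p|_p > k·max(|u|,|v|)^{−κ}` whenever the left-hand side is nonzero. -/
theorem ridout_consequence
    (P : Finset Nat.Primes) (γ : (p : Nat.Primes) → ℚ_[(p : ℕ)])
    (halg : ∀ p ∈ P, IsAlgebraic ℚ (γ p))
    (κ : ℝ) (hκ : 2 < κ)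
    (hfin : {uv : ℤ × ℤ | Int.gcd uv.1 uv.2 = 1 ∧
      (∏ p ∈ P, ‖(uv.1 : ℚ_[(p : ℕ)]) - (uv.2 : ℚ_[(p : ℕ)]) * γ p‖) ≤
        (max (|uv.1| : ℝ) (|uv.2| : ℝ)) ^ (-κ)}.Finite) :
    ∃ k : ℝ, 0 < k ∧ ∀ u v : ℤ, ¬ (u = 0 ∧ v = 0) →
      (∏ p ∈ P, ‖(u : ℚ_[(p : ℕ)]) - (v : ℚ_[(p : ℕ)]) * γ p‖) ≠ 0 →
      k * (max (|u| : ℝ) (|v| : ℝ)) ^ (-κ) <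
        ∏ p ∈ P, ‖(u : ℚ_[(p : ℕ)]) - (v : ℚ_[(p : ℕ)]) * γ p‖ :=
  ridout_consequence_general P γ κ hκ hfin
end

section
/- Let m be a positive integer and χ a nontrivial Dirichlet character modulo m with complex values. Then the series ∑_{n=1}^∞ χ(n)/n converges, and lim_{x→∞} ∑_{n=1}^∞ χ(n) n^{−1} e^{−n²/x} = ∑_{n=1}^∞ χ(n)/n = L(1, χ), where the limit is taken as the real number x tends to infinity. -/
/-!
The partial sums of a nontrivial character vanish over every full period, so they are bounded and
`∑ χ(n)/n` converges by Dirichlet's test. Both limits then come from one Abelian theorem: if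
`∑ aₙ` converges to `L` and weights `cᵢ(n)` are antitone in `n`, tend to `0` as `n → ∞` and to `1`
for each fixed `n`, then summation by parts writes `∑ cᵢ(n) aₙ` as an average of the partial sums
against the nonnegative weights `cᵢ(n) - cᵢ(n+1)`, and such averages converge to `L`
(Silverman–Toeplitz). The weights `exp(-n²/x)` give the Gaussian limit. The weights `n^{-t}`,
`t → 0⁺`, give `L(1 + t, χ)`, which tends to `L(1, χ)` because the L-function of a nontrivial
character is continuous at `1`; this identifies the sum.
-/

open Filter Finset Topology

section RegularSummation

variable {ι E : Type*} [NormedAddCommGroup E] [NormedSpace ℝ E] {l : Filter ι}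

theorem Antitone.hasSum_sub_succ {c : ℕ → ℝ} (hc : Antitone c) (hc0 : Tendsto c atTop (𝓝 0)) :
    HasSum (fun n => c n - c (n + 1)) (c 0) := by
  refine (hasSum_iff_tendsto_nat_of_nonneg (fun n => sub_nonneg.2 (hc n.le_succ)) _).2 ?_
  simpa only [sum_range_sub', sub_zero] using tendsto_const_nhds.sub hc0

theorem sum_range_smul_eq_smul_add_sum_range (c : ℕ → ℝ) (a : ℕ → E) (N : ℕ) :
    ∑ n ∈ range N, c n • a n =
      c N • ∑ n ∈ range N, a n + ∑ n ∈ range N, (c n - c (n + 1)) • ∑ k ∈ range (n + 1), a k := by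
  induction N with
  | zero => simp
  | succ N ih =>
    rw [sum_range_succ, ih, sum_range_succ a N,
      sum_range_succ (fun n => (c n - c (n + 1)) • ∑ k ∈ range (n + 1), a k) N, sum_range_succ a N]
    simp only [sub_smul, smul_add]
    abel

theorem Antitone.hasSum_sub_smul_sum_range [CompleteSpace E] {c : ℕ → ℝ} {a : ℕ → E}
    {C : ℝ} (hc : Antitone c) (hc0 : Tendsto c atTop (𝓝 0))
    (ha : ∀ N, ‖∑ n ∈ range N, a n‖ ≤ C) (hca : Summable fun n => c n • a n) :
    HasSum (fun n => (c n - c (n + 1)) • ∑ k ∈ range (n + 1), a k) (∑' n, c n • a n) := by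
  have hsummable : Summable fun n => (c n - c (n + 1)) • ∑ k ∈ range (n + 1), a k := by
    refine Summable.of_norm_bounded ((hc.hasSum_sub_succ hc0).summable.mul_right C) fun n => ?_
    rw [norm_smul, Real.norm_of_nonneg (sub_nonneg.2 (hc n.le_succ))]
    exact mul_le_mul_of_nonneg_left (ha _) (sub_nonneg.2 (hc n.le_succ))
  have hboundary : Tendsto (fun N => c N • ∑ n ∈ range N, a n) atTop (𝓝 0) :=
    hc0.zero_smul_isBoundedUnder_le (isBoundedUnder_of ⟨C, fun N => ha N⟩)
  have hlim := hboundary.add hsummable.hasSum.tendsto_sum_nat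
  simp_rw [zero_add, ← sum_range_smul_eq_smul_add_sum_range] at hlim
  rw [tendsto_nhds_unique hca.hasSum.tendsto_sum_nat hlim]
  exact hsummable.hasSum

theorem tendsto_tsum_smul_of_tendsto_zero {w : ι → ℕ → ℝ} {x : ℕ → E} {B : ℝ}
    (hx : Tendsto x atTop (𝓝 0)) (hw_nonneg : ∀ᶠ i in l, ∀ n, 0 ≤ w i n)
    (hw_summable : ∀ᶠ i in l, Summable (w i)) (hw_bdd : ∀ᶠ i in l, ∑' n, w i n ≤ B)
    (hw_pt : ∀ n, Tendsto (fun i => w i n) l (𝓝 0)) :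
    Tendsto (fun i => ∑' n, w i n • x n) l (𝓝 0) := by
  obtain ⟨C, hC⟩ := hx.norm.bddAbove_range
  rw [NormedAddGroup.tendsto_nhds_zero]
  intro ε hε
  set δ := ε / (2 * (|B| + 1))
  have hδ : 0 < δ := by positivity
  have hδB : δ * B < ε / 2 := by
    calc δ * B ≤ δ * |B| := by gcongr; exact le_abs_self B
      _ < δ * (|B| + 1) := by gcongr; linarith
      _ = ε / 2 := by simp only [δ]; field_simp
  obtain ⟨M, hM⟩ := eventually_atTop.1
    ((tendsto_zero_iff_norm_tendsto_zero.1 hx).eventually (gt_mem_nhds hδ))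
  have hhead : Tendsto (fun i => C * ∑ n ∈ range M, w i n) l (𝓝 0) := by
    simpa using (tendsto_finsetSum _ fun n _ => hw_pt n).const_mul C
  filter_upwards [hw_nonneg, hw_summable, hw_bdd, hhead.eventually (gt_mem_nhds (half_pos hε))]
    with i hw0 hws hwB hwM
  set head : ℕ → ℝ := fun n => if n ∈ range M then C * w i n else 0
  have hhead_summable : Summable head :=
    summable_of_ne_finset_zero (s := range M) (by simp +contextual [head])
  have hbound (n : ℕ) : ‖w i n • x n‖ ≤ head n + δ * w i n := by
    rw [norm_smul, Real.norm_of_nonneg (hw0 n), mul_comm]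
    have hxn := hC (Set.mem_range_self n)
    by_cases hn : n ∈ range M
    · simp only [head, if_pos hn]; nlinarith [hw0 n]
    · simp only [head, if_neg hn]; nlinarith [hM n (by simpa using hn), hw0 n]
  calc ‖∑' n, w i n • x n‖
      ≤ ∑' n, (head n + δ * w i n) :=
        tsum_of_norm_bounded (hhead_summable.add (hws.mul_left δ)).hasSum hbound
    _ = C * ∑ n ∈ range M, w i n + δ * ∑' n, w i n := by
        rw [hhead_summable.tsum_add (hws.mul_left δ), tsum_mul_left,
          tsum_eq_sum (s := range M) (by simp +contextual [head]), mul_sum]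
        exact congr_arg₂ _ (sum_congr rfl fun n hn => if_pos hn) rfl
    _ < ε / 2 + ε / 2 := by
        have : δ * ∑' n, w i n ≤ δ * B := by gcongr
        linarith
    _ = ε := add_halves ε

theorem tendsto_tsum_smul_of_tendsto_sum_range [CompleteSpace E] {a : ℕ → E} {L : E}
    {c : ι → ℕ → ℝ} (ha : Tendsto (fun N => ∑ n ∈ range N, a n) atTop (𝓝 L))
    (hc_anti : ∀ᶠ i in l, Antitone (c i)) (hc_zero : ∀ᶠ i in l, Tendsto (c i) atTop (𝓝 0))
    (hc_summable : ∀ᶠ i in l, Summable fun n => c i n • a n)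
    (hc_one : ∀ n, Tendsto (fun i => c i n) l (𝓝 1)) :
    Tendsto (fun i => ∑' n, c i n • a n) l (𝓝 L) := by
  set S : ℕ → E := fun N => ∑ n ∈ range N, a n
  obtain ⟨C, hC⟩ := ha.norm.bddAbove_range
  have hS : Tendsto (fun n => S (n + 1) - L) atTop (𝓝 0) :=
    tendsto_sub_nhds_zero_iff.2 (ha.comp (tendsto_add_atTop_nat 1))
  have hd_pt (n : ℕ) : Tendsto (fun i => c i n - c i (n + 1)) l (𝓝 0) := by
    simpa using (hc_one n).sub (hc_one (n + 1))
  have hsplit : ∀ᶠ i in l, ∑' n, c i n • a n =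
      ∑' n, (c i n - c i (n + 1)) • (S (n + 1) - L) + c i 0 • L := by
    filter_upwards [hc_anti, hc_zero, hc_summable] with i hanti hzero hsum
    have := ((hanti.hasSum_sub_smul_sum_range hzero (fun N => hC (Set.mem_range_self N)) hsum).sub
      ((hanti.hasSum_sub_succ hzero).smul_const L))
    simp_rw [← smul_sub] at this
    rw [this.tsum_eq, sub_add_cancel]
  have hrem : Tendsto (fun i => ∑' n, (c i n - c i (n + 1)) • (S (n + 1) - L)) l (𝓝 0) := by
    refine tendsto_tsum_smul_of_tendsto_zero (B := 2) hS ?_ ?_ ?_ hd_pt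
    · filter_upwards [hc_anti] with i hanti n using sub_nonneg.2 (hanti n.le_succ)
    · filter_upwards [hc_anti, hc_zero] with i hanti hzero using
        (hanti.hasSum_sub_succ hzero).summable
    · filter_upwards [hc_anti, hc_zero, (hc_one 0).eventually (gt_mem_nhds one_lt_two)]
        with i hanti hzero hlt
      exact (hanti.hasSum_sub_succ hzero).tsum_eq ▸ hlt.le
  have hlim := hrem.add ((hc_one 0).smul_const L)
  rw [zero_add, one_smul] at hlim
  exact hlim.congr' (hsplit.mono fun i hi => hi.symm)

theorem tendsto_tsum_rpow_neg_smul_nhdsGT_zero [CompleteSpace E] {a : ℕ → E} {L : E}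
    (ha : Tendsto (fun N => ∑ n ∈ range N, a n) atTop (𝓝 L))
    (hsum : ∀ t : ℝ, 0 < t → Summable fun n : ℕ => ((n : ℝ) + 1) ^ (-t) • a n) :
    Tendsto (fun t : ℝ => ∑' n : ℕ, ((n : ℝ) + 1) ^ (-t) • a n) (𝓝[>] 0) (𝓝 L) := by
  have hpos : ∀ᶠ t in 𝓝[>] (0 : ℝ), 0 < t := self_mem_nhdsWithin
  refine tendsto_tsum_smul_of_tendsto_sum_range ha ?_ ?_ (hpos.mono hsum) fun n => ?_
  · filter_upwards [hpos] with t ht p q hpq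
    exact Real.rpow_le_rpow_of_nonpos (by positivity) (by gcongr) (by linarith)
  · filter_upwards [hpos] with t ht
    exact (tendsto_rpow_neg_atTop ht).comp
      (tendsto_natCast_atTop_atTop.atTop_add tendsto_const_nhds)
  · have : ContinuousAt (fun t : ℝ => ((n : ℝ) + 1) ^ (-t)) 0 :=
      (Real.continuousAt_const_rpow (by positivity)).comp continuous_neg.continuousAt
    simpa using this.tendsto.mono_left nhdsWithin_le_nhds

theorem tendsto_tsum_exp_neg_sq_div_smul_atTop [CompleteSpace E] {a : ℕ → E} {L : E}
    (ha : Tendsto (fun N => ∑ n ∈ range N, a n) atTop (𝓝 L)) :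
    Tendsto (fun x : ℝ => ∑' n : ℕ, Real.exp (-(n : ℝ) ^ 2 / x) • a n) atTop (𝓝 L) := by
  have ha0 : Tendsto a atTop (𝓝 0) := by
    simpa [sum_range_succ_sub_sum] using (ha.comp (tendsto_add_atTop_nat 1)).sub ha
  obtain ⟨C, hC⟩ := ha0.norm.bddAbove_range
  have hpos : ∀ᶠ x in atTop, (0 : ℝ) < x := eventually_gt_atTop 0
  refine tendsto_tsum_smul_of_tendsto_sum_range ha ?_ ?_ ?_ fun n => ?_
  · filter_upwards [hpos] with x hx p q hpq
    dsimp only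
    gcongr
  · filter_upwards [hpos] with x hx
    refine Real.tendsto_exp_atBot.comp ?_
    simp_rw [neg_div]
    exact tendsto_neg_atTop_atBot.comp (((tendsto_pow_atTop two_ne_zero).comp
      tendsto_natCast_atTop_atTop).atTop_div_const hx)
  · filter_upwards [hpos] with x hx
    have hexp : Summable fun n : ℕ => Real.exp (-(n : ℝ) ^ 2 / x) := by
      have := Real.summable_exp_nat_mul_of_ge (neg_lt_zero.2 (inv_pos.2 hx))
        fun n => (by exact_mod_cast Nat.le_self_pow two_ne_zero n : (n : ℝ) ≤ (n : ℝ) ^ 2)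
      simpa only [neg_mul, neg_div, inv_mul_eq_div] using this
    refine Summable.of_norm_bounded (hexp.mul_right C) fun n => ?_
    rw [norm_smul, Real.norm_of_nonneg (Real.exp_nonneg _)]
    exact mul_le_mul_of_nonneg_left (hC (Set.mem_range_self n)) (Real.exp_nonneg _)
  · have : Tendsto (fun x : ℝ => -(n : ℝ) ^ 2 / x) atTop (𝓝 0) :=
      tendsto_const_nhds.div_atTop tendsto_id
    simpa [Function.comp_def] using (Real.continuous_exp.tendsto 0).comp this

end RegularSummation

theorem tsum_eq_tsum_add_one_of_eq_zero {M : Type*} [AddCommMonoid M] [TopologicalSpace M]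
    {f : ℕ → M} (hf : f 0 = 0) : ∑' n, f n = ∑' n, f (n + 1) :=
  (tsum_pnat_eq_tsum_of_eq_zero hf).symm.trans tsum_pnat_eq_tsum_succ

theorem LSeries.term_one_add_ofReal_add_one (f : ℕ → ℂ) (t : ℝ) (n : ℕ) :
    LSeries.term f (1 + t) (n + 1) = ((n : ℝ) + 1) ^ (-t) • (f (n + 1) / ↑(n + 1)) := by
  have hn : ((n : ℂ) + 1) ≠ 0 := by exact_mod_cast n.succ_ne_zero
  rw [LSeries.term_of_ne_zero n.succ_ne_zero, Complex.real_smul,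
    Complex.ofReal_cpow (by positivity)]
  push_cast
  rw [Complex.cpow_add _ _ hn, Complex.cpow_one, Complex.cpow_neg]
  field_simp

theorem LSeries_one_add_ofReal_eq_tsum (f : ℕ → ℂ) (t : ℝ) :
    LSeries f (1 + t) = ∑' n : ℕ, ((n : ℝ) + 1) ^ (-t) • (f (n + 1) / ↑(n + 1)) := by
  rw [LSeries, tsum_eq_tsum_add_one_of_eq_zero (LSeries.term_zero f _)]
  exact tsum_congr (LSeries.term_one_add_ofReal_add_one f t)

theorem ZMod.sum_range_natCast {M : Type*} [AddCommMonoid M] (m : ℕ) [NeZero m]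
    (f : ZMod m → M) : ∑ i ∈ range m, f i = ∑ j, f j :=
  sum_nbij' Nat.cast ZMod.val (fun _ _ => mem_univ _) (fun j _ => mem_range.2 (ZMod.val_lt j))
    (fun _ hi => ZMod.val_cast_of_lt (mem_range.1 hi)) (fun j _ => ZMod.natCast_zmod_val j)
    fun _ _ => rfl

theorem Function.Periodic.sum_range_eq_sum_range_mod {M : Type*} [AddCommMonoid M] {g : ℕ → M}
    {p : ℕ} (hg : Function.Periodic g p) (hp : ∑ i ∈ range p, g i = 0) (N : ℕ) :
    ∑ i ∈ range N, g i = ∑ i ∈ range (N % p), g i := by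
  have hshift (q i : ℕ) : g (p * q + i) = g i := by
    rw [add_comm, mul_comm]; exact hg.nat_mul q i
  have hfull (q : ℕ) : ∑ i ∈ range (p * q), g i = 0 := by
    induction q with
    | zero => simp
    | succ q ih => rw [Nat.mul_succ, sum_range_add, ih, zero_add]; simpa only [hshift] using hp
  conv_lhs => rw [← Nat.div_add_mod N p, sum_range_add, hfull, zero_add]
  simp only [hshift]

namespace DirichletCharacter

variable {m : ℕ} [NeZero m] {χ : DirichletCharacter ℂ m}

theorem norm_sum_range_natCast_add_le (hχ : χ ≠ 1) (k N : ℕ) :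
    ‖∑ i ∈ range N, χ ↑(i + k)‖ ≤ m := by
  have hperiodic : Function.Periodic (fun i : ℕ => χ ↑(i + k)) m := fun i => by
    simp only [Nat.cast_add, ZMod.natCast_self, add_zero]
  have hperiod : ∑ i ∈ range m, χ ↑(i + k) = 0 := by
    simp only [Nat.cast_add]
    rw [ZMod.sum_range_natCast m (fun j => χ (j + k))]
    exact (Equiv.sum_comp (Equiv.addRight (k : ZMod m)) (χ ·)).trans
      (MulChar.sum_eq_zero_of_ne_one hχ)
  rw [hperiodic.sum_range_eq_sum_range_mod hperiod]
  calc ‖∑ i ∈ range (N % m), χ ↑(i + k)‖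
      ≤ ∑ i ∈ range (N % m), ‖χ ↑(i + k)‖ := norm_sum_le _ _
    _ ≤ ∑ i ∈ range (N % m), 1 := sum_le_sum fun i _ => χ.norm_le_one _
    _ ≤ m := by simpa using (Nat.mod_lt N (NeZero.pos m)).le

theorem exists_tendsto_sum_range_div (hχ : χ ≠ 1) :
    ∃ L, Tendsto (fun N => ∑ n ∈ range N, χ ↑(n + 1) / ↑(n + 1)) atTop (𝓝 L) := by
  have hanti : Antitone fun n : ℕ => 1 / ((n : ℝ) + 1) := fun p q hpq => by
    dsimp only; gcongr
  have := hanti.cauchySeq_series_mul_of_tendsto_zero_of_bounded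
    tendsto_one_div_add_atTop_nhds_zero_nat (norm_sum_range_natCast_add_le hχ 1)
  have hterm (n : ℕ) : (1 / ((n : ℝ) + 1)) • χ ↑(n + 1) = χ ↑(n + 1) / ↑(n + 1) := by
    rw [Complex.real_smul]; push_cast; ring
  simp_rw [hterm] at this
  exact cauchySeq_tendsto_of_complete this

theorem LFunction_one_eq_of_tendsto (hχ : χ ≠ 1) {L : ℂ}
    (hL : Tendsto (fun N => ∑ n ∈ range N, χ ↑(n + 1) / ↑(n + 1)) atTop (𝓝 L)) :
    L = LFunction χ 1 := by
  have hre (t : ℝ) (ht : 0 < t) : 1 < (1 + t : ℂ).re := by simpa using ht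
  have hsum (t : ℝ) (ht : 0 < t) :
      Summable fun n : ℕ => ((n : ℝ) + 1) ^ (-t) • (χ ↑(n + 1) / ↑(n + 1) : ℂ) :=
    ((summable_nat_add_iff 1).2 (χ.LSeriesSummable_of_one_lt_re (hre t ht))).congr
      (LSeries.term_one_add_ofReal_add_one _ t)
  have hLSeries : ∀ᶠ t : ℝ in 𝓝[>] 0, LFunction χ (1 + t) =
      ∑' n : ℕ, ((n : ℝ) + 1) ^ (-t) • (χ ↑(n + 1) / ↑(n + 1) : ℂ) := by
    filter_upwards [self_mem_nhdsWithin] with t ht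
    rw [χ.LFunction_eq_LSeries (hre t ht), LSeries_one_add_ofReal_eq_tsum]
  have hcont : Tendsto (fun t : ℝ => LFunction χ (1 + t)) (𝓝[>] 0) (𝓝 (LFunction χ 1)) := by
    have h1 : Tendsto (fun t : ℝ => (1 + t : ℂ)) (𝓝 0) (𝓝 1) := by
      simpa using (Complex.continuous_ofReal.tendsto 0).const_add 1
    exact ((χ.differentiableAt_LFunction 1 (Or.inr hχ)).continuousAt.tendsto.comp h1).mono_left
      nhdsWithin_le_nhds
  exact tendsto_nhds_unique (tendsto_tsum_rpow_neg_smul_nhdsGT_zero hL hsum)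
    (hcont.congr' hLSeries)

end DirichletCharacter

/-- Let `χ` be a nontrivial Dirichlet character mod `m`.  Then
`∑ χ(n)/n` converges, and `∑_{n≥1} χ(n) n⁻¹ e^{−n²/x} → ∑ χ(n)/n = L(1, χ)` as the real
number `x → ∞`. -/
theorem abel_limit_L_one (m : ℕ) [NeZero m] (χ : DirichletCharacter ℂ m) (hχ : χ ≠ 1) :
    ∃ L : ℂ,
      Tendsto (fun N : ℕ => ∑ n ∈ Finset.Icc 1 N, χ (n : ZMod m) / (n : ℂ))
        atTop (nhds L) ∧
      L = DirichletCharacter.LFunction χ 1 ∧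
      Tendsto (fun x : ℝ =>
          ∑' n : ℕ, χ (n : ZMod m) / (n : ℂ) * Real.exp (-(n : ℝ) ^ 2 / x))
        atTop (nhds L) := by
  obtain ⟨L, hL⟩ := DirichletCharacter.exists_tendsto_sum_range_div hχ
  refine ⟨L, ?_, DirichletCharacter.LFunction_one_eq_of_tendsto hχ hL, ?_⟩
  · simpa only [← Ico_add_one_right_eq_Icc, sum_Ico_eq_sum_range, add_tsub_cancel_right,
      add_comm 1] using hL
  · have hL₀ : Tendsto (fun N => ∑ n ∈ range N, χ ↑n / (n : ℂ)) atTop (𝓝 L) := by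
      rw [← tendsto_add_atTop_iff_nat 1]
      simpa [sum_range_succ'] using hL
    simpa [mul_comm, Complex.real_smul] using tendsto_tsum_exp_neg_sq_div_smul_atTop hL₀
end
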